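/- Let 0 < p < 1 and α, β₁, β₂, β₃ > 0. Let V₁, V₂, V₃ be independent ℕ-valued random variables with P(Vᵢ ≤ x) = (1 − p^{(x+1)^α})^{βᵢ} for all x ∈ ℕ, and set X₁ = max{V₁, V₃}, X₂ = max{V₂, V₃}. Then the stress–strength probability satisfies P(X₁ < X₂) = Σ_{i=0}^∞ [(1 − p^{(i+2)^α})^{β₂} − (1 − p^{(i+1)^α})^{β₂}] · (1 − p^{(i+1)^α})^{β₁+β₃}. -/

import Mathlib

open MeasureTheory ProbabilityTheory

/-!
Since `max a c < max b c ↔ a < b ∧ c < b`, the event `X₁ < X₂` says that `V₂` strictly exceeds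
both `V₁` and `V₃`. Splitting on the value `i + 1` of `V₂` and using independence, its probability
is `∑ F₁(i) (F₂(i + 1) - F₂(i)) F₃(i)`, and `F₁ F₃` is the EDW CDF with shape `β₁ + β₃`.
-/

/-- The CDF of the exponentiated discrete Weibull distribution `EDW(α, p, β)`:
`F_EDW(x; α, p, β) = (1 - p^((x+1)^α))^β`. -/
noncomputable def edwCDF (α p β : ℝ) (x : ℕ) : ℝ :=
  (1 - p ^ (((x : ℝ) + 1) ^ α)) ^ β

/-- The PMF of the exponentiated discrete Weibull distribution `EDW(α, p, β)`:
`f_EDW(x; α, p, β) = (1 - p^((x+1)^α))^β - (1 - p^(x^α))^β`. -/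
noncomputable def edwPMF (α p β : ℝ) (x : ℕ) : ℝ :=
  (1 - p ^ (((x : ℝ) + 1) ^ α)) ^ β - (1 - p ^ ((x : ℝ) ^ α)) ^ β

namespace ProbabilityTheory

variable {Ω β : Type*} {mΩ : MeasurableSpace Ω} {μ : Measure Ω}

lemma iIndepFun.measure_preimage_inter_three_eq_mul [MeasurableSpace β] {X Y Z : Ω → β}
    (h : iIndepFun ![X, Y, Z] μ) {A B C : Set β}
    (hA : MeasurableSet A) (hB : MeasurableSet B) (hC : MeasurableSet C) :
    μ (X ⁻¹' A ∩ Y ⁻¹' B ∩ Z ⁻¹' C) = μ (X ⁻¹' A) * μ (Y ⁻¹' B) * μ (Z ⁻¹' C) := by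
  have := h.measure_inter_preimage_eq_mul Finset.univ (sets := ![A, B, C])
    (fun i _ => by fin_cases i <;> assumption)
  have hinter : ⋂ i ∈ Finset.univ, ![X, Y, Z] i ⁻¹' ![A, B, C] i =
      X ⁻¹' A ∩ Y ⁻¹' B ∩ Z ⁻¹' C := by
    ext ω
    simp [Fin.forall_fin_succ, and_assoc]
  rwa [hinter, Fin.prod_univ_three] at this

lemma measure_lt_and_lt_eq_tsum [Preorder β] [Countable β] [MeasurableSpace β]
    [DiscreteMeasurableSpace β] {V₁ V₂ V₃ : Ω → β}
    (hm₁ : Measurable V₁) (hm₂ : Measurable V₂) (hm₃ : Measurable V₃)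
    (hindep : iIndepFun ![V₁, V₂, V₃] μ) :
    μ {ω | V₁ ω < V₂ ω ∧ V₃ ω < V₂ ω} =
      ∑' j, μ {ω | V₁ ω < j} * μ {ω | V₂ ω = j} * μ {ω | V₃ ω < j} := by
  have hunion : {ω | V₁ ω < V₂ ω ∧ V₃ ω < V₂ ω} =
      ⋃ j, V₁ ⁻¹' Set.Iio j ∩ V₂ ⁻¹' {j} ∩ V₃ ⁻¹' Set.Iio j := by
    ext ω
    simp only [Set.mem_ofPred_eq, Set.mem_iUnion, Set.mem_inter_iff, Set.mem_preimage,
      Set.mem_Iio, Set.mem_singleton_iff]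
    exact ⟨fun h => ⟨V₂ ω, ⟨h.1, rfl⟩, h.2⟩, fun ⟨j, ⟨h₁, h₂⟩, h₃⟩ => h₂ ▸ ⟨h₁, h₃⟩⟩
  rw [hunion, measure_iUnion]
  · exact tsum_congr fun j => hindep.measure_preimage_inter_three_eq_mul
      .of_discrete .of_discrete .of_discrete
  · intro i j hij
    exact Set.disjoint_left.2 fun ω hi hj => hij (hi.1.2.symm.trans hj.1.2)
  · exact fun j => ((hm₁ .of_discrete).inter (hm₂ .of_discrete)).inter (hm₃ .of_discrete)

lemma measure_lt_and_lt_eq_tsum_succ {V₁ V₂ V₃ : Ω → ℕ}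
    (hm₁ : Measurable V₁) (hm₂ : Measurable V₂) (hm₃ : Measurable V₃)
    (hindep : iIndepFun ![V₁, V₂, V₃] μ) :
    μ {ω | V₁ ω < V₂ ω ∧ V₃ ω < V₂ ω} =
      ∑' i : ℕ, μ {ω | V₁ ω ≤ i} * μ {ω | V₂ ω = i + 1} * μ {ω | V₃ ω ≤ i} := by
  rw [measure_lt_and_lt_eq_tsum hm₁ hm₂ hm₃ hindep, tsum_eq_zero_add' ENNReal.summable]
  simp

lemma measureReal_eq_succ_eq_sub [IsFiniteMeasure μ] {V : Ω → ℕ} (hm : Measurable V) (i : ℕ) :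
    μ.real {ω | V ω = i + 1} = μ.real {ω | V ω ≤ i + 1} - μ.real {ω | V ω ≤ i} := by
  have hdiff : {ω | V ω = i + 1} = {ω | V ω ≤ i + 1} \ {ω | V ω ≤ i} := by
    ext ω; simp only [Set.mem_ofPred_eq, Set.mem_sdiff]; omega
  rw [hdiff]
  exact measureReal_sdiff (fun ω h => le_trans h i.le_succ) (hm measurableSet_Iic)

end ProbabilityTheory

lemma edwCDF_add {α p : ℝ} (hp0 : 0 < p) (hp1 : p < 1) (β β' : ℝ) (x : ℕ) :
    edwCDF α p (β + β') x = edwCDF α p β x * edwCDF α p β' x :=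
  Real.rpow_add (sub_pos.2 (Real.rpow_lt_one hp0.le hp1 (by positivity))) β β'

theorem bdew_stress_strength_general
    {Ω : Type*} [MeasurableSpace Ω] (μ : Measure Ω) [IsProbabilityMeasure μ]
    (α p β₁ β₂ β₃ : ℝ)
    (hp0 : 0 < p) (hp1 : p < 1)
    (V₁ V₂ V₃ : Ω → ℕ)
    (hm₁ : Measurable V₁) (hm₂ : Measurable V₂) (hm₃ : Measurable V₃)
    (hindep : iIndepFun ![V₁, V₂, V₃] μ)
    (hcdf₁ : ∀ x : ℕ, (μ {ω | V₁ ω ≤ x}).toReal = edwCDF α p β₁ x)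
    (hcdf₂ : ∀ x : ℕ, (μ {ω | V₂ ω ≤ x}).toReal = edwCDF α p β₂ x)
    (hcdf₃ : ∀ x : ℕ, (μ {ω | V₃ ω ≤ x}).toReal = edwCDF α p β₃ x) :
    (μ {ω | max (V₁ ω) (V₃ ω) < max (V₂ ω) (V₃ ω)}).toReal =
      ∑' i : ℕ,
        ((1 - p ^ (((i : ℝ) + 2) ^ α)) ^ β₂ - (1 - p ^ (((i : ℝ) + 1) ^ α)) ^ β₂) *
          (1 - p ^ (((i : ℝ) + 1) ^ α)) ^ (β₁ + β₃) := by
  have hevent : {ω | max (V₁ ω) (V₃ ω) < max (V₂ ω) (V₃ ω)} =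
      {ω | V₁ ω < V₂ ω ∧ V₃ ω < V₂ ω} := by
    simp only [max_comm _ (V₃ _), max_lt_max_right_iff]
  rw [hevent, measure_lt_and_lt_eq_tsum_succ hm₁ hm₂ hm₃ hindep,
    ENNReal.tsum_toReal_eq fun _ => by finiteness]
  refine tsum_congr fun i => ?_
  have hcast : ((i + 1 : ℕ) : ℝ) + 1 = i + 2 := by push_cast; ring
  simp only [ENNReal.toReal_mul, ← measureReal_def] at hcdf₁ hcdf₂ hcdf₃ ⊢
  rw [measureReal_eq_succ_eq_sub hm₂, hcdf₁, hcdf₂, hcdf₂, hcdf₃, mul_right_comm,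
    ← edwCDF_add hp0 hp1, mul_comm]
  simp only [edwCDF, hcast]

/-- Result 2: the stress-strength probability `P(X₁ < X₂)` for the BDEW distribution. -/
theorem bdew_stress_strength
    {Ω : Type*} [MeasurableSpace Ω] (μ : Measure Ω) [IsProbabilityMeasure μ]
    (α p β₁ β₂ β₃ : ℝ)
    (hp0 : 0 < p) (hp1 : p < 1) (hα : 0 < α)
    (hβ₁ : 0 < β₁) (hβ₂ : 0 < β₂) (hβ₃ : 0 < β₃)
    (V₁ V₂ V₃ : Ω → ℕ)
    (hm₁ : Measurable V₁) (hm₂ : Measurable V₂) (hm₃ : Measurable V₃)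
    (hindep : iIndepFun ![V₁, V₂, V₃] μ)
    (hcdf₁ : ∀ x : ℕ, (μ {ω | V₁ ω ≤ x}).toReal = edwCDF α p β₁ x)
    (hcdf₂ : ∀ x : ℕ, (μ {ω | V₂ ω ≤ x}).toReal = edwCDF α p β₂ x)
    (hcdf₃ : ∀ x : ℕ, (μ {ω | V₃ ω ≤ x}).toReal = edwCDF α p β₃ x) :
    (μ {ω | max (V₁ ω) (V₃ ω) < max (V₂ ω) (V₃ ω)}).toReal =
      ∑' i : ℕ,
        ((1 - p ^ (((i : ℝ) + 2) ^ α)) ^ β₂ - (1 - p ^ (((i : ℝ) + 1) ^ α)) ^ β₂) *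
          (1 - p ^ (((i : ℝ) + 1) ^ α)) ^ (β₁ + β₃) :=
  bdew_stress_strength_general μ α p β₁ β₂ β₃ hp0 hp1 V₁ V₂ V₃ hm₁ hm₂ hm₃ hindep hcdf₁ hcdf₂ hcdf₃
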